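/- Let J be a strongly stable monomial ideal in A[x₀,…,xₙ] over a commutative noetherian ring A, let m be the minimal degree with J_m ≠ 0, and assume that no monomial of degree larger than m in B_J is divisible by the minimal variable x₀. If F_J and G_J are two J-marked bases such that the ideals they generate agree in all sufficiently large degrees (i.e., there exists s with (F_J)_t = (G_J)_t for all t ≥ s), then F_J = G_J. -/

import Mathlib

open MvPolynomial

noncomputable section

/-- Exponent vectors of monomials in the variables `x₀, …, xₙ`. -/
abbrev Mon (n : ℕ) : Type := Fin (n + 1) →₀ ℕ

namespace MarkedFamilies

variable {n : ℕ}

/-- The total degree of a monomial given by its exponent vector. -/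
def mdeg (α : Mon n) : ℕ := α.sum fun _ e => e

/-- A monomial ideal, identified with its (upward closed) set of monomials. -/
def IsMonomialIdeal (J : Set (Mon n)) : Prop := ∀ α ∈ J, ∀ δ : Mon n, α + δ ∈ J

/-- A strongly stable monomial ideal: a monomial ideal such that for every monomial
`x^α ∈ J`, every variable `x_j` dividing `x^α` and every `i > j`, `(x_i/x_j)·x^α ∈ J`. -/
def IsStronglyStable (J : Set (Mon n)) : Prop :=
  IsMonomialIdeal J ∧
    ∀ α ∈ J, ∀ j : Fin (n + 1), α j ≠ 0 → ∀ i : Fin (n + 1), j < i →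
      α - Finsupp.single j 1 + Finsupp.single i 1 ∈ J

/-- The minimal monomial generators `B_J` of a monomial ideal `J`. -/
def minGens (J : Set (Mon n)) : Set (Mon n) :=
  {α | α ∈ J ∧ ∀ j : Fin (n + 1), α j ≠ 0 → α - Finsupp.single j 1 ∉ J}

/-- `min x^γ ≥ max x^δ`: every variable dividing `x^γ` is at least every variable
dividing `x^δ` (vacuously true when either monomial is `1`). -/
def minGeMax (γ δ : Mon n) : Prop := ∀ i ∈ γ.support, ∀ j ∈ δ.support, j ≤ i

/-- Lexicographic order induced by `x₀ < ⋯ < xₙ`: `a <ₗₑₓ b` iff at the largest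
index where they differ, `a` has the smaller exponent. -/
def lexLt (a b : Mon n) : Prop :=
  ∃ i : Fin (n + 1), a i < b i ∧ ∀ j : Fin (n + 1), i < j → a j = b j

/-- A saturated strongly stable ideal: strongly stable and no minimal generator is
divisible by `x₀`. -/
def IsSaturatedSS (J : Set (Mon n)) : Prop :=
  IsStronglyStable J ∧ ∀ α ∈ minGens J, α 0 = 0

/-- The truncation `J_{≥ t}`: the (monomial) ideal generated by the monomials of `J`
of degree at least `t`. -/
def truncSet (J : Set (Mon n)) (t : ℕ) : Set (Mon n) := {α | α ∈ J ∧ t ≤ mdeg α}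

section Ring

variable (A : Type*) [CommRing A]

/-- `⟨N(J)⟩`: the `A`-span of the monomials not in `J`. -/
def nSpan (J : Set (Mon n)) : Submodule A (MvPolynomial (Fin (n + 1)) A) :=
  Submodule.span A {p | ∃ β : Mon n, β ∉ J ∧ p = monomial β (1 : A)}

/-- `⟨N(J)_s⟩`: the `A`-span of the monomials of degree `s` not in `J`. -/
def nSpanDeg (J : Set (Mon n)) (s : ℕ) : Submodule A (MvPolynomial (Fin (n + 1)) A) :=
  Submodule.span A {p | ∃ β : Mon n, β ∉ J ∧ mdeg β = s ∧ p = monomial β (1 : A)}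

/-- `I_s`: the degree-`s` homogeneous component of an ideal, as an `A`-submodule. -/
def idealDeg (I : Ideal (MvPolynomial (Fin (n + 1)) A)) (s : ℕ) :
    Submodule A (MvPolynomial (Fin (n + 1)) A) :=
  Submodule.restrictScalars A I ⊓ homogeneousSubmodule (Fin (n + 1)) A s

/-- `I_{≥ s}`: the ideal `⊕_{t ≥ s} I_t`, i.e. the ideal generated by the homogeneous
elements of `I` of degree at least `s`. -/
def idealGeq (I : Ideal (MvPolynomial (Fin (n + 1)) A)) (s : ℕ) :
    Ideal (MvPolynomial (Fin (n + 1)) A) :=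
  Ideal.span {f | f ∈ I ∧ ∃ t : ℕ, s ≤ t ∧ f.IsHomogeneous t}

/-- A homogeneous ideal of the polynomial ring. -/
def IsHomogIdeal (I : Ideal (MvPolynomial (Fin (n + 1)) A)) : Prop :=
  ∀ f ∈ I, ∀ s : ℕ, homogeneousComponent s f ∈ I

variable {A}

/-- A `J`-marked set: a family assigning to each minimal generator `x^α ∈ B_J` a
polynomial `f_α = x^α − Σ_{x^β ∈ N(J)_{|α|}} c_{αβ} x^β`. -/
def IsMarkedSet (J : Set (Mon n)) (F : Mon n → MvPolynomial (Fin (n + 1)) A) : Prop :=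
  ∀ α ∈ minGens J, (F α).coeff α = 1 ∧
    ∀ β ∈ (F α).support, β ≠ α → β ∉ J ∧ mdeg β = mdeg α

/-- The ideal generated by a marked set. -/
def markedIdeal (J : Set (Mon n)) (F : Mon n → MvPolynomial (Fin (n + 1)) A) :
    Ideal (MvPolynomial (Fin (n + 1)) A) :=
  Ideal.span (F '' minGens J)

/-- A `J`-marked basis: a `J`-marked set `F` with `A[x] = (F) ⊕ ⟨N(J)⟩` as `A`-modules. -/
def IsMarkedBasis (J : Set (Mon n)) (F : Mon n → MvPolynomial (Fin (n + 1)) A) : Prop :=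
  IsMarkedSet J F ∧
    IsCompl (Submodule.restrictScalars A (markedIdeal J F)) (nSpan A J)

/-- `F_J^{(s)} = { x^δ f_α : deg(x^δ f_α) = s, min x^α ≥ max x^δ }`. -/
def FSet (J : Set (Mon n)) (F : Mon n → MvPolynomial (Fin (n + 1)) A) (s : ℕ) :
    Set (MvPolynomial (Fin (n + 1)) A) :=
  {p | ∃ α δ : Mon n, α ∈ minGens J ∧ mdeg α + mdeg δ = s ∧ minGeMax α δ ∧
        p = monomial δ (1 : A) * F α}

/-- `F̂_J^{(s)} = { x^δ f_α : deg(x^δ f_α) = s, min x^α < max x^δ }`. -/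
def FHatSet (J : Set (Mon n)) (F : Mon n → MvPolynomial (Fin (n + 1)) A) (s : ℕ) :
    Set (MvPolynomial (Fin (n + 1)) A) :=
  {p | ∃ α δ : Mon n, α ∈ minGens J ∧ mdeg α + mdeg δ = s ∧ ¬ minGeMax α δ ∧
        p = monomial δ (1 : A) * F α}

/-- `SF_J^{(s)} = { x^δ f_β − x^γ f_α : x^δ f_β ∈ F̂_J^{(s)}, x^γ f_α ∈ F_J^{(s)},
x^δ x^β = x^γ x^α }`. -/
def SFSet (J : Set (Mon n)) (F : Mon n → MvPolynomial (Fin (n + 1)) A) (s : ℕ) :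
    Set (MvPolynomial (Fin (n + 1)) A) :=
  {p | ∃ α γ β δ : Mon n, α ∈ minGens J ∧ β ∈ minGens J ∧
      mdeg β + mdeg δ = s ∧ ¬ minGeMax β δ ∧
      mdeg α + mdeg γ = s ∧ minGeMax α γ ∧
      δ + β = γ + α ∧ p = monomial δ (1 : A) * F β - monomial γ (1 : A) * F α}

/-- A `(J_s)`-marked set: one marked polynomial `f̃_γ = x^γ − Σ_{x^δ ∈ N(J)_s} d_{γδ} x^δ`
for each monomial `x^γ` of degree `s` in `J`. -/
def IsTruncMarkedSet (J : Set (Mon n)) (s : ℕ)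
    (f : Mon n → MvPolynomial (Fin (n + 1)) A) : Prop :=
  ∀ γ : Mon n, γ ∈ J → mdeg γ = s →
    (f γ).coeff γ = 1 ∧ ∀ β ∈ (f γ).support, β ≠ γ → β ∉ J ∧ mdeg β = s

end Ring

/-- Index set for the generic coefficients `C_{αβ}` (`x^α ∈ B_J`, `x^β ∈ N(J)_{|α|}`). -/
abbrev CIdx (J : Set (Mon n)) : Type :=
  {p : Mon n × Mon n // p.1 ∈ minGens J ∧ p.2 ∉ J ∧ mdeg p.2 = mdeg p.1}

/-- The coefficient ring `ℤ[C]`. -/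
abbrev ZC (J : Set (Mon n)) : Type := MvPolynomial (CIdx J) ℤ

/-- The generic `J`-marked set `𝓕_J = { x^α − Σ_{x^β ∈ N(J)_{|α|}} C_{αβ} x^β }`
in `ℤ[C][x]`, characterized through its coefficients. -/
def IsGenericMarkedSet (J : Set (Mon n))
    (𝓕 : Mon n → MvPolynomial (Fin (n + 1)) (ZC J)) : Prop :=
  ∀ α : Mon n, ∀ hα : α ∈ minGens J,
    (𝓕 α).coeff α = 1 ∧
    (∀ γ : Mon n, ∀ hγ : γ ∉ J ∧ mdeg γ = mdeg α,
      (𝓕 α).coeff γ = - MvPolynomial.X ⟨(α, γ), hα, hγ.1, hγ.2⟩) ∧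
    (∀ γ : Mon n, γ ≠ α → ¬(γ ∉ J ∧ mdeg γ = mdeg α) → (𝓕 α).coeff γ = 0)

/-- The ideal `𝔦_J ⊆ ℤ[C]` generated by the `x`-coefficients of all polynomials
in `(𝓕_J) ∩ ⟨N(J)⟩`. -/
def markedCoeffIdeal (J : Set (Mon n))
    (𝓕 : Mon n → MvPolynomial (Fin (n + 1)) (ZC J)) : Ideal (ZC J) :=
  Ideal.span {c : ZC J | ∃ p : MvPolynomial (Fin (n + 1)) (ZC J),
    p ∈ markedIdeal J 𝓕 ∧ p ∈ nSpan (ZC J) J ∧ ∃ γ : Mon n, p.coeff γ = c}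

/-- The evaluation homomorphism `φ_{F_J} : ℤ[C] → A`, `C_{αβ} ↦ c_{αβ}`, associated to a
`J`-marked set `F` with `f_α = x^α − Σ c_{αβ} x^β` (so `c_{αβ} = −(F α).coeff β`). -/
noncomputable def evalHom (J : Set (Mon n)) {A : Type*} [CommRing A]
    (F : Mon n → MvPolynomial (Fin (n + 1)) A) : ZC J →+* A :=
  MvPolynomial.eval₂Hom (Int.castRingHom A) fun p => -((F p.val.1).coeff p.val.2)

/-- `x^γ` is the `σ`-leading monomial of `g` (with nonzero leading coefficient). -/
def IsLeadingMon {A : Type*} [CommRing A] (σlt : Mon n → Mon n → Prop)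
    (g : MvPolynomial (Fin (n + 1)) A) (γ : Mon n) : Prop :=
  g.coeff γ ≠ 0 ∧ ∀ δ ∈ g.support, δ ≠ γ → σlt δ γ

/-- `LC(I, x^γ)`: the set of leading coefficients at `x^γ` of elements of `I`,
together with `0`. -/
def LCset {A : Type*} [CommRing A] (σlt : Mon n → Mon n → Prop)
    (I : Ideal (MvPolynomial (Fin (n + 1)) A)) (γ : Mon n) : Set A :=
  {a | ∃ g ∈ I, IsLeadingMon σlt g γ ∧ g.coeff γ = a} ∪ {0}

/-- A monic ideal with respect to the term ordering `σ`. -/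
def IsMonicIdeal {A : Type*} [CommRing A] (σlt : Mon n → Mon n → Prop)
    (I : Ideal (MvPolynomial (Fin (n + 1)) A)) : Prop :=
  ∀ γ : Mon n, LCset σlt I γ = {0} ∨ LCset σlt I γ = Set.univ

/-- The set of `σ`-leading monomials of elements of `I` (i.e. `in_σ(I)`,
identified with its set of monomials). -/
def leadingMons {A : Type*} [CommRing A] (σlt : Mon n → Mon n → Prop)
    (I : Ideal (MvPolynomial (Fin (n + 1)) A)) : Set (Mon n) :=
  {γ | ∃ g ∈ I, IsLeadingMon σlt g γ}

end MarkedFamilies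

/-!
Let `d = G α - F α`; it lies in `⟨N(J)_{|α|}⟩`. For `s` large, `x₀^s G α` lies in
`(G)_{s+|α|} = (F)_{s+|α|}`, so `x₀^s d ∈ (F)`. Because every minimal generator of degree
`> m` avoids `x₀`, multiplication by `x₀` maps monomials of `N(J)` of degree `≥ m` into `N(J)`;
hence also `x₀^s d ∈ ⟨N(J)⟩`. As `(F) ∩ ⟨N(J)⟩ = 0` and `x₀^s` is a non-zero-divisor, `d = 0`.
-/

namespace MarkedFamilies

variable {n : ℕ}

section Monomials

open Finsupp

lemma mdeg_eq_degree (α : Mon n) : mdeg α = α.degree := rfl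

lemma IsMonomialIdeal.mem_of_le {J : Set (Mon n)} (hJ : IsMonomialIdeal J) {γ β : Mon n}
    (hγ : γ ∈ J) (hγβ : γ ≤ β) : β ∈ J := by
  obtain ⟨δ, rfl⟩ := le_iff_exists_add.mp hγβ
  exact hJ γ hγ δ

lemma exists_mem_minGens_le {J : Set (Mon n)} {α : Mon n} (hα : α ∈ J) :
    ∃ γ ∈ minGens J, γ ≤ α := by
  obtain ⟨γ, ⟨hγJ, hγα⟩, hmin⟩ :=
    wellFounded_lt.has_min {γ | γ ∈ J ∧ γ ≤ α} ⟨α, hα, le_rfl⟩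
  refine ⟨γ, ⟨hγJ, fun j hj hmem => hmin _ ⟨hmem, tsub_le_self.trans hγα⟩ ?_⟩, hγα⟩
  refine lt_of_le_of_ne tsub_le_self fun h => hj ?_
  have := DFunLike.congr_fun h j
  simp only [tsub_apply, single_eq_same] at this
  omega

/-- A minimal generator `x^γ` dividing `x₀ x^β` but not `x^β` contains `x₀`, so it has degree
`≤ m ≤ |β|`; hence it misses some variable `x_i` (`i > 0`) of `x^β`, and the strongly stable
move `x^γ x_i / x₀` is a monomial of `J` dividing `x^β`. -/
theorem add_single_zero_one_notMem {J : Set (Mon n)} (hJ : IsStronglyStable J) {m : ℕ}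
    (hx0 : ∀ α ∈ minGens J, m < mdeg α → α 0 = 0) {β : Mon n} (hβ : β ∉ J)
    (hβm : m ≤ mdeg β) : β + single 0 1 ∉ J := by
  intro hmem
  obtain ⟨γ, hγ, hγle⟩ := exists_mem_minGens_le hmem
  have hle (a : Fin (n + 1)) : γ a ≤ β a + single (0 : Fin (n + 1)) 1 a := hγle a
  by_cases hγβ : γ ≤ β
  · exact hβ (hJ.1.mem_of_le hγ.1 hγβ)
  have hγ0 : γ 0 = β 0 + 1 := by
    by_contra h
    refine hγβ fun a => ?_
    have := hle a
    rcases eq_or_ne a 0 with rfl | ha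
    · simp only [single_eq_same] at this
      omega
    · simpa [single_apply, Ne.symm ha] using this
  have hγm : mdeg γ ≤ m := not_lt.mp fun h => by simp [hx0 γ hγ h] at hγ0
  obtain ⟨i, hi⟩ : ∃ i, γ i < β i := by
    by_contra! h
    have hβγ : β + single 0 1 ≤ γ := fun a => by
      rcases eq_or_ne a 0 with rfl | ha
      · simp [hγ0]
      · simpa [single_apply, Ne.symm ha] using h a
    have := degree_mono hβγ
    rw [map_add, degree_single, ← mdeg_eq_degree, ← mdeg_eq_degree] at this
    omega
  have hi0 : (0 : Fin (n + 1)) < i := Fin.pos_of_ne_zero fun h => by subst h; omega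
  refine hβ (hJ.1.mem_of_le (hJ.2 γ hγ.1 0 (by omega) i hi0) fun a => ?_)
  have := hle a
  rcases eq_or_ne a 0 with rfl | ha
  · simp [hi0.ne, hγ0]
  rcases eq_or_ne a i with rfl | hai
  · simp [ha.symm]
    omega
  · simpa [single_apply, ha.symm, hai.symm] using this

theorem add_single_zero_notMem {J : Set (Mon n)} (hJ : IsStronglyStable J) {m : ℕ}
    (hx0 : ∀ α ∈ minGens J, m < mdeg α → α 0 = 0) {β : Mon n} (hβ : β ∉ J)
    (hβm : m ≤ mdeg β) (k : ℕ) : β + single 0 k ∉ J := by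
  induction k with
  | zero => simpa using hβ
  | succ k ih =>
    rw [single_add, ← add_assoc]
    refine add_single_zero_one_notMem hJ hx0 ih ?_
    rw [mdeg_eq_degree, map_add, ← mdeg_eq_degree]
    omega

end Monomials

section Polynomials

variable {A : Type*} [CommRing A] {J : Set (Mon n)}

lemma IsMarkedSet.isHomogeneous {F : Mon n → MvPolynomial (Fin (n + 1)) A}
    (hF : IsMarkedSet J F) {α : Mon n} (hα : α ∈ minGens J) :
    (F α).IsHomogeneous (mdeg α) := by
  intro β hβ
  rw [show (Finsupp.weight 1 : Mon n →+ ℕ) = Finsupp.weight fun _ => 1 from rfl,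
    ← Finsupp.degree_eq_weight_one, ← mdeg_eq_degree]
  by_cases h : β = α
  · rw [h]
  · exact ((hF α hα).2 β (mem_support_iff.mpr hβ) h).2

lemma IsMarkedSet.mem_support_sub {F G : Mon n → MvPolynomial (Fin (n + 1)) A}
    (hF : IsMarkedSet J F) (hG : IsMarkedSet J G) {α β : Mon n} (hα : α ∈ minGens J)
    (hβ : β ∈ (G α - F α).support) : β ∉ J ∧ mdeg β = mdeg α := by
  have hβα : β ≠ α := by
    rintro rfl
    simp [(hF β hα).1, (hG β hα).1] at hβ
  rw [mem_support_iff, coeff_sub] at hβ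
  by_cases hGβ : (G α).coeff β = 0
  · rw [hGβ, zero_sub, neg_ne_zero] at hβ
    exact (hF α hα).2 β (mem_support_iff.mpr hβ) hβα
  · exact (hG α hα).2 β (mem_support_iff.mpr hGβ) hβα

lemma monomial_one_mul_mem_nSpan {c : Mon n} {p : MvPolynomial (Fin (n + 1)) A}
    (hp : ∀ β ∈ p.support, c + β ∉ J) : monomial c 1 * p ∈ nSpan A J := by
  rw [p.as_sum, Finset.mul_sum]
  refine Submodule.sum_mem _ fun β hβ => ?_
  rw [monomial_mul, one_mul, ← mul_one (coeff β p), ← smul_eq_mul, ← smul_monomial]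
  exact Submodule.smul_mem _ _ (Submodule.subset_span ⟨c + β, hp β hβ, rfl⟩)

end Polynomials

end MarkedFamilies

open MarkedFamilies in
theorem stmt_16_general {n : ℕ} {A : Type*} [CommRing A]
    (J : Set (Mon n)) (hJ : IsStronglyStable J) (m : ℕ)
    (hm2 : ∀ α ∈ J, m ≤ mdeg α)
    (hx0 : ∀ α ∈ minGens J, m < mdeg α → α 0 = 0)
    (F G : Mon n → MvPolynomial (Fin (n + 1)) A)
    (hF : IsMarkedBasis J F) (hG : IsMarkedBasis J G)
    (hagree : ∃ s : ℕ, ∀ t : ℕ, s ≤ t →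
      idealDeg A (markedIdeal J F) t = idealDeg A (markedIdeal J G) t) :
    ∀ α ∈ minGens J, F α = G α := by
  intro α hα
  obtain ⟨s, hs⟩ := hagree
  set x₀s : MvPolynomial (Fin (n + 1)) A := monomial (Finsupp.single 0 s) 1
  have hGF : x₀s * G α ∈ markedIdeal J F := by
    have hmem : x₀s * G α ∈ idealDeg A (markedIdeal J G) (s + mdeg α) :=
      ⟨Ideal.mul_mem_left _ _ (Ideal.subset_span ⟨α, hα, rfl⟩),
        (isHomogeneous_monomial _ (Finsupp.degree_single _ _)).mul (hG.1.isHomogeneous hα)⟩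
    rw [← hs _ (Nat.le_add_right _ _)] at hmem
    exact hmem.1
  have hI : x₀s * (G α - F α) ∈ (markedIdeal J F).restrictScalars A := by
    rw [mul_sub]
    exact sub_mem hGF (Ideal.mul_mem_left _ _ (Ideal.subset_span ⟨α, hα, rfl⟩))
  have hN : x₀s * (G α - F α) ∈ nSpan A J := monomial_one_mul_mem_nSpan fun β hβ => by
    obtain ⟨hβJ, hβα⟩ := hF.1.mem_support_sub hG.1 hα hβ
    rw [add_comm]
    exact add_single_zero_notMem hJ hx0 hβJ (hβα ▸ hm2 α hα.1) s
  have h0 := Submodule.disjoint_def.mp hF.2.disjoint _ hI hN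
  rw [← mul_zero x₀s, monomial_one_mul_cancel_left_iff, sub_eq_zero] at h0
  exact h0.symm

open MarkedFamilies in
/-- two `J`-marked bases generating ideals that agree in all large
degrees coincide, provided no minimal generator of degree `> m` is divisible by `x₀`. -/
theorem stmt_16 {n : ℕ} {A : Type*} [CommRing A] [IsNoetherianRing A]
    (J : Set (Mon n)) (hJ : IsStronglyStable J) (m : ℕ)
    (hm1 : ∃ α ∈ J, mdeg α = m) (hm2 : ∀ α ∈ J, m ≤ mdeg α)
    (hx0 : ∀ α ∈ minGens J, m < mdeg α → α 0 = 0)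
    (F G : Mon n → MvPolynomial (Fin (n + 1)) A)
    (hF : IsMarkedBasis J F) (hG : IsMarkedBasis J G)
    (hagree : ∃ s : ℕ, ∀ t : ℕ, s ≤ t →
      idealDeg A (markedIdeal J F) t = idealDeg A (markedIdeal J G) t) :
    ∀ α ∈ minGens J, F α = G α :=
  stmt_16_general J hJ m hm2 hx0 F G hF hG hagree
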